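/- For every a ∈ ℚ_q, the value Ψ_q(a) lies in ℤ_q. -/

import Mathlib

open PowerSeries

/-- `Ψ ∈ T + T²ℤ[[T]]` satisfies `∑_{j≥0} p^{-j} Ψ(p^j T)^{q^j} = T` (coefficientwise). -/
def IsPsi (p q : ℕ) (Ψ : PowerSeries ℤ) : Prop :=
  PowerSeries.constantCoeff (R := ℤ) Ψ = 0 ∧ PowerSeries.coeff (R := ℤ) 1 Ψ = 1 ∧
  ∀ n : ℕ,
    (∑ j ∈ Finset.range (n + 1),
      ((p : ℚ) ^ j)⁻¹ *
        PowerSeries.coeff (R := ℚ) n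
          ((PowerSeries.rescale ((p : ℚ) ^ j) (Ψ.map (Int.castRingHom ℚ))) ^ (q ^ j)))
      = PowerSeries.coeff (R := ℚ) n (PowerSeries.X : PowerSeries ℚ)

/-- Evaluation of the entire function defined by an integral power series at a point of a
complete nonarchimedean field. -/
noncomputable def psiEval (Ψ : PowerSeries ℤ) {K : Type} [NormedField K] (x : K) : K :=
  ∑' i : ℕ, ((PowerSeries.coeff (R := ℤ) i Ψ : ℤ) : K) * x ^ i

/-!
Read coefficientwise, the functional equation expresses the coefficient `cₙ` of `Ψ` through
`p^{j(n-1)}`-multiples of coefficients of `Ψ^{qʲ}` (`j ≥ 1`). Bootstrapping, `‖cₙ‖ ≤ C ‖p‖^{tn}`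
for every `t`, so `Ψ` is entire and `∑ₖ p⁻ᵏ Ψ(pᵏ x)^{qᵏ} = x` holds for every `x ∈ K`.
Subtracting this identity at `x` from `p⁻¹` times the one at `p x` gives
`Ψ(x) = ∑ₖ p^{-(k+1)} (yₖ^{qᵏ} - yₖ^{q^{k+1}})` with `yₖ = Ψ(p^{k+1} x)`. If the `yₖ` are
integral, then `yₖ^{q^{k+1}} ≡ yₖ^{qᵏ} mod p^{k+1}` (the residue field lies in `𝔽_q`, and `p`-th
powers improve congruences mod `p`), so every term is integral. This is an induction on the
size of `x`, starting from the unit ball, on which `Ψ` is integral since its coefficients are.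
-/

namespace PowerSeries

open Finset

theorem coeff_pow_eq_zero_of_lt {R : Type*} [CommSemiring R] {φ : PowerSeries R}
    (hφ : constantCoeff φ = 0) {n N : ℕ} (h : n < N) : coeff n (φ ^ N) = 0 := by
  obtain ⟨ψ, rfl⟩ := X_dvd_iff.mpr hφ
  rw [mul_pow, coeff_X_pow_mul', if_neg (by omega)]

section NormedField

variable {K : Type*} [NormedField K]

theorem summable_norm_coeff_mul_pow {φ : PowerSeries K} {C ρ : ℝ} (hρ : 0 ≤ ρ)
    (hφ : ∀ n, ‖coeff n φ‖ ≤ C * ρ ^ n) {x : K} (hx : ρ * ‖x‖ < 1) :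
    Summable fun n => ‖coeff n φ * x ^ n‖ := by
  refine .of_nonneg_of_le (fun _ => norm_nonneg _) (fun n => ?_)
    ((summable_geometric_of_lt_one (by positivity) hx).mul_left C)
  rw [norm_mul, norm_pow, mul_pow, ← mul_assoc]
  exact mul_le_mul_of_nonneg_right (hφ n) (by positivity)

theorem hasSum_coeff_mul_mul_pow [CompleteSpace K] {φ χ : PowerSeries K} {x : K}
    (hφ : Summable fun n => ‖coeff n φ * x ^ n‖) (hχ : Summable fun n => ‖coeff n χ * x ^ n‖) :
    HasSum (fun n => coeff n (φ * χ) * x ^ n)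
      ((∑' n, coeff n φ * x ^ n) * ∑' n, coeff n χ * x ^ n) := by
  have hcauchy : (fun n => coeff n (φ * χ) * x ^ n) = fun n =>
      ∑ kl ∈ antidiagonal n, coeff kl.1 φ * x ^ kl.1 * (coeff kl.2 χ * x ^ kl.2) := by
    ext n
    rw [coeff_mul, Finset.sum_mul]
    refine Finset.sum_congr rfl fun kl hkl => ?_
    rw [← mem_antidiagonal.mp hkl, pow_add]
    ring
  rw [hcauchy, tsum_mul_tsum_eq_tsum_sum_antidiagonal_of_summable_norm hφ hχ]
  exact (summable_norm_sum_mul_antidiagonal_of_summable_norm hφ hχ).of_norm.hasSum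

end NormedField

section Ultrametric

variable {K : Type*} [NormedField K] [IsUltrametricDist K]

theorem norm_coeff_mul_le {φ χ : PowerSeries K} {C D ρ : ℝ} (hρ : 0 ≤ ρ)
    (hφ : ∀ n, ‖coeff n φ‖ ≤ C * ρ ^ n) (hχ : ∀ n, ‖coeff n χ‖ ≤ D * ρ ^ n) (n : ℕ) :
    ‖coeff n (φ * χ)‖ ≤ C * D * ρ ^ n := by
  have hC : 0 ≤ C := by simpa using (norm_nonneg _).trans (hφ 0)
  have hD : 0 ≤ D := by simpa using (norm_nonneg _).trans (hχ 0)
  rw [coeff_mul]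
  refine IsUltrametricDist.norm_sum_le_of_forall_le_of_nonneg (by positivity) fun kl hkl => ?_
  rw [norm_mul, ← mem_antidiagonal.mp hkl, pow_add, mul_mul_mul_comm]
  exact mul_le_mul (hφ _) (hχ _) (norm_nonneg _) (by positivity)

theorem norm_coeff_pow_le {φ : PowerSeries K} {C ρ : ℝ} (hρ : 0 ≤ ρ)
    (hφ : ∀ n, ‖coeff n φ‖ ≤ C * ρ ^ n) (N n : ℕ) : ‖coeff n (φ ^ N)‖ ≤ C ^ N * ρ ^ n := by
  induction N generalizing n with
  | zero => rcases n with _ | n <;> simp [coeff_one, hρ]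
  | succ N ih => rw [pow_succ, pow_succ]; exact norm_coeff_mul_le hρ ih hφ n

theorem hasSum_coeff_pow_mul_pow [CompleteSpace K] {φ : PowerSeries K} {C ρ : ℝ} (hρ : 0 ≤ ρ)
    (hφ : ∀ n, ‖coeff n φ‖ ≤ C * ρ ^ n) {x : K} (hx : ρ * ‖x‖ < 1) (N : ℕ) :
    HasSum (fun n => coeff n (φ ^ N) * x ^ n) ((∑' n, coeff n φ * x ^ n) ^ N) := by
  induction N with
  | zero =>
    simpa using hasSum_single (f := fun n => coeff n (1 : PowerSeries K) * x ^ n) 0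
      fun n hn => by simp [coeff_one, hn]
  | succ N ih =>
    rw [pow_succ, pow_succ, ← ih.tsum_eq]
    exact hasSum_coeff_mul_mul_pow
      (summable_norm_coeff_mul_pow hρ (norm_coeff_pow_le hρ hφ N) hx)
      (summable_norm_coeff_mul_pow hρ hφ hx)

end Ultrametric

end PowerSeries

open Filter Topology

theorem eventually_pow_mul_lt_one {r : ℝ} (h0 : 0 ≤ r) (h1 : r < 1) (c : ℝ) :
    ∀ᶠ m in atTop, r ^ m * c < 1 :=
  ((tendsto_pow_atTop_nhds_zero_of_lt_one h0 h1).mul_const c).eventually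
    (gt_mem_nhds (by simp))

theorem norm_psiEval_le_one_of_norm_le_one {K : Type} [NormedField K] [IsUltrametricDist K]
    (Ψ : PowerSeries ℤ) {y : K} (hy : ‖y‖ ≤ 1) : ‖psiEval Ψ y‖ ≤ 1 :=
  IsUltrametricDist.norm_tsum_le_of_forall_le_of_nonneg zero_le_one fun n => by
    rw [norm_mul, norm_pow]
    exact mul_le_one₀ (IsUltrametricDist.norm_intCast_le_one K _) (by positivity)
      (pow_le_one₀ (norm_nonneg _) hy)

section Frobenius

variable {K : Type*} [NormedField K] [IsUltrametricDist K] {p : ℕ}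

theorem norm_natCast_le_of_dvd {m : ℕ} (h : p ∣ m) : ‖(m : K)‖ ≤ ‖(p : K)‖ := by
  obtain ⟨k, rfl⟩ := h
  rw [Nat.cast_mul, norm_mul]
  exact mul_le_of_le_one_right (norm_nonneg _) (IsUltrametricDist.norm_natCast_le_one K k)

theorem norm_pow_prime_sub_pow_le (hp : p.Prime) {u v : K} (hv : ‖v‖ ≤ 1)
    (huv : ‖u - v‖ ≤ ‖(p : K)‖) : ‖u ^ p - v ^ p‖ ≤ ‖(p : K)‖ * ‖u - v‖ := by
  have hp1 : ‖(p : K)‖ ≤ 1 := IsUltrametricDist.norm_natCast_le_one K p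
  have hexpand : u ^ p - v ^ p =
      ∑ i ∈ Finset.range p, v ^ i * (u - v) ^ (p - i) * (p.choose i : K) := by
    rw [← Finset.sum_range_succ_sub_top, ← add_pow, add_sub_cancel]
    simp
  rw [hexpand]
  refine IsUltrametricDist.norm_sum_le_of_forall_le_of_nonneg (by positivity) fun i hi => ?_
  have hi : i < p := Finset.mem_range.mp hi
  rw [norm_mul, norm_mul, norm_pow, norm_pow]
  rcases Nat.eq_zero_or_pos i with rfl | hi0
  · have : ‖u - v‖ ^ (p - 1) ≤ ‖(p : K)‖ :=
      (pow_le_of_le_one (norm_nonneg _) (huv.trans hp1) (by have := hp.two_le; omega)).trans huv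
    calc ‖v‖ ^ 0 * ‖u - v‖ ^ (p - 0) * ‖((p.choose 0 : ℕ) : K)‖
        = ‖u - v‖ ^ (p - 1) * ‖u - v‖ := by
          rw [Nat.choose_zero_right, Nat.cast_one, norm_one, Nat.sub_zero,
            ← pow_sub_one_mul hp.ne_zero]
          ring
      _ ≤ _ := mul_le_mul_of_nonneg_right this (norm_nonneg _)
  · calc ‖v‖ ^ i * ‖u - v‖ ^ (p - i) * ‖((p.choose i : ℕ) : K)‖ ≤ 1 * ‖u - v‖ * ‖(p : K)‖ := by
          gcongr
          · exact pow_le_one₀ (norm_nonneg _) hv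
          · exact pow_le_of_le_one (norm_nonneg _) (huv.trans hp1) (by omega)
          · exact norm_natCast_le_of_dvd (hp.dvd_choose_self hi0.ne' hi)
      _ = _ := by ring

theorem norm_pow_prime_pow_sub_pow_le (hp : p.Prime) {u v : K} (hv : ‖v‖ ≤ 1)
    (huv : ‖u - v‖ ≤ ‖(p : K)‖) (f : ℕ) :
    ‖u ^ p ^ f - v ^ p ^ f‖ ≤ ‖(p : K)‖ ^ f * ‖u - v‖ := by
  have hp1 : ‖(p : K)‖ ≤ 1 := IsUltrametricDist.norm_natCast_le_one K p
  induction f with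
  | zero => simp
  | succ f ih =>
    have hvf : ‖v ^ p ^ f‖ ≤ 1 := by rw [norm_pow]; exact pow_le_one₀ (norm_nonneg _) hv
    have huvf : ‖u ^ p ^ f - v ^ p ^ f‖ ≤ ‖(p : K)‖ :=
      ih.trans ((mul_le_of_le_one_left (norm_nonneg _) (pow_le_one₀ (norm_nonneg _) hp1)).trans huv)
    rw [pow_succ, pow_mul, pow_mul, pow_succ', mul_assoc]
    exact (norm_pow_prime_sub_pow_le hp hvf huvf).trans (by gcongr)

theorem norm_pow_pow_succ_sub_pow_pow_le (hp : p.Prime) {f : ℕ} (hf : 0 < f)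
    (hres : ∀ y : K, ‖y‖ ≤ 1 → ‖y ^ p ^ f - y‖ ≤ ‖(p : K)‖) {y : K} (hy : ‖y‖ ≤ 1) (k : ℕ) :
    ‖y ^ (p ^ f) ^ (k + 1) - y ^ (p ^ f) ^ k‖ ≤ ‖(p : K)‖ ^ (k + 1) := by
  have hp1 : ‖(p : K)‖ ≤ 1 := IsUltrametricDist.norm_natCast_le_one K p
  induction k with
  | zero => simpa using hres y hy
  | succ k ih =>
    have hv : ‖y ^ (p ^ f) ^ k‖ ≤ 1 := by rw [norm_pow]; exact pow_le_one₀ (norm_nonneg _) hy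
    have huv := ih.trans (pow_le_of_le_one (norm_nonneg _) hp1 k.succ_ne_zero)
    have hsucc : ∀ j, y ^ (p ^ f) ^ (j + 1) = (y ^ (p ^ f) ^ j) ^ p ^ f := fun j => by
      rw [pow_succ, pow_mul]
    rw [hsucc (k + 1)]
    nth_rewrite 2 [hsucc k]
    calc _ ≤ ‖(p : K)‖ ^ f * ‖y ^ (p ^ f) ^ (k + 1) - y ^ (p ^ f) ^ k‖ :=
          norm_pow_prime_pow_sub_pow_le hp hv huv f
      _ ≤ ‖(p : K)‖ * ‖(p : K)‖ ^ (k + 1) :=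
          mul_le_mul (pow_le_of_le_one (norm_nonneg _) hp1 hf.ne') ih (norm_nonneg _)
            (norm_nonneg _)
      _ = ‖(p : K)‖ ^ (k + 1 + 1) := by ring

end Frobenius

namespace IsPsi

variable {p q : ℕ} {Ψ : PowerSeries ℤ}

theorem sum_range_coeff_pow (hΨ : IsPsi p q Ψ) (hp : p ≠ 0) (hq : 2 ≤ q) {n M : ℕ}
    (hn : 1 ≤ n) (hM : n < M) :
    ∑ j ∈ Finset.range M, (p : ℤ) ^ (j * (n - 1)) * coeff n (Ψ ^ q ^ j) =
      if n = 1 then 1 else 0 := by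
  have hcoeff : ∑ j ∈ Finset.range (n + 1), (p : ℤ) ^ (j * (n - 1)) * coeff n (Ψ ^ q ^ j) =
      if n = 1 then 1 else 0 := by
    have h := hΨ.2.2 n
    rw [coeff_X] at h
    have hterm : ∀ j, ((p : ℚ) ^ j)⁻¹ *
        coeff n (rescale ((p : ℚ) ^ j) (Ψ.map (Int.castRingHom ℚ)) ^ q ^ j) =
        (((p : ℤ) ^ (j * (n - 1)) * coeff n (Ψ ^ q ^ j) : ℤ) : ℚ) := by
      intro j
      rw [← map_pow, coeff_rescale, ← map_pow, coeff_map, eq_intCast]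
      obtain ⟨m, rfl⟩ : ∃ m, n = m + 1 := ⟨n - 1, by omega⟩
      push_cast
      rw [pow_mul, pow_succ]
      field_simp
    simp only [hterm] at h
    exact_mod_cast h
  rw [← Finset.sum_range_add_sum_Ico _ hM, hcoeff, Finset.sum_eq_zero, add_zero]
  intro j hj
  have hnj : n < q ^ j :=
    (Nat.lt_of_succ_le (Finset.mem_Ico.mp hj).1).trans (Nat.lt_pow_self hq)
  rw [coeff_pow_eq_zero_of_lt hΨ.1 hnj, mul_zero]

theorem coeff_eq_neg_sum (hΨ : IsPsi p q Ψ) (hp : p ≠ 0) (hq : 2 ≤ q) (n : ℕ) :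
    coeff (n + 2) Ψ = -∑ j ∈ Finset.range (n + 2),
      (p : ℤ) ^ ((j + 1) * (n + 1)) * coeff (n + 2) (Ψ ^ q ^ (j + 1)) := by
  have h := hΨ.sum_range_coeff_pow hp hq (n := n + 2) (M := n + 3) (by omega) (by omega)
  rw [Finset.sum_range_succ', if_neg (by omega)] at h
  rw [show n + 2 - 1 = n + 1 by omega] at h
  simp only [zero_mul, pow_zero, pow_one, one_mul] at h
  linear_combination h

variable {K : Type} [NormedField K] [IsUltrametricDist K]

theorem exists_norm_coeff_le (hΨ : IsPsi p q Ψ) (hq : 2 ≤ q) (hp : 0 < ‖(p : K)‖) (t : ℕ) :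
    ∃ C, 1 ≤ C ∧ ∀ n, ‖coeff n (Ψ.map (Int.castRingHom K))‖ ≤ C * (‖(p : K)‖ ^ t) ^ n := by
  set r := ‖(p : K)‖
  have hr1 : r ≤ 1 := IsUltrametricDist.norm_natCast_le_one K p
  have hp0 : p ≠ 0 := by rintro rfl; simp [r] at hp
  have hcast : ∀ N n, ((coeff n (Ψ ^ N) : ℤ) : K) = coeff n (Ψ.map (Int.castRingHom K) ^ N) :=
    fun N n => by rw [← map_pow, coeff_map, eq_intCast]
  have hunit : ∀ N n, ‖coeff n (Ψ.map (Int.castRingHom K) ^ N)‖ ≤ 1 := fun N n => by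
    rw [← hcast]; exact IsUltrametricDist.norm_intCast_le_one K _
  induction t with
  | zero => exact ⟨1, le_rfl, fun n => by simpa using hunit 1 n⟩
  | succ t ih =>
    obtain ⟨C, hC1, hC⟩ := ih
    have hpow := norm_coeff_pow_le (by positivity) hC
    set C' := C ^ q ^ (2 * t + 1)
    have hC'1 : 1 ≤ C' := one_le_pow₀ hC1
    refine ⟨C' / r ^ (t + 1), ?_, fun n => ?_⟩
    · exact (one_le_div (by positivity)).2 ((pow_le_one₀ hp.le hr1).trans hC'1)
    rcases n with _ | _ | n
    · simpa [hΨ.1] using by positivity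
    · simpa [hΨ.2.1, hp.ne'] using hC'1
    rw [coeff_map, eq_intCast, hΨ.coeff_eq_neg_sum hp0 hq, Int.cast_neg, norm_neg]
    push_cast
    refine IsUltrametricDist.norm_sum_le_of_forall_le_of_nonneg (by positivity) fun j _ => ?_
    rw [norm_mul, norm_pow, hcast, div_mul_eq_mul_div, le_div_iff₀ (by positivity), ← pow_mul]
    -- small `j`: inductive bound on `Ψ ^ q ^ (j + 1)`; large `j`: `p ^ ((j + 1) * (n + 1))` alone
    rcases le_or_gt (j + 1) (2 * t + 1) with hj | hj
    · calc r ^ ((j + 1) * (n + 1)) * ‖coeff (n + 2) (Ψ.map (Int.castRingHom K) ^ q ^ (j + 1))‖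
            * r ^ (t + 1)
          ≤ r ^ ((j + 1) * (n + 1)) * (C' * (r ^ t) ^ (n + 2)) * r ^ (t + 1) := by
            gcongr
            refine (hpow _ _).trans (mul_le_mul_of_nonneg_right ?_ (by positivity))
            exact pow_le_pow_right₀ hC1 (Nat.pow_le_pow_right (by omega) hj)
        _ = C' * r ^ ((j + 1) * (n + 1) + t * (n + 2) + (t + 1)) := by ring
        _ ≤ C' * r ^ ((t + 1) * (n + 2)) :=
            mul_le_mul_of_nonneg_left (pow_le_pow_of_le_one hp.le hr1 (by nlinarith))
              (by positivity)
    · calc r ^ ((j + 1) * (n + 1)) * ‖coeff (n + 2) (Ψ.map (Int.castRingHom K) ^ q ^ (j + 1))‖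
            * r ^ (t + 1)
          ≤ r ^ ((j + 1) * (n + 1)) * 1 * 1 := by
            gcongr
            exacts [hunit _ _, pow_le_one₀ hp.le hr1]
        _ ≤ 1 * r ^ ((t + 1) * (n + 2)) := by
            rw [mul_one, mul_one, one_mul]
            exact pow_le_pow_of_le_one hp.le hr1 (by nlinarith)
        _ ≤ C' * r ^ ((t + 1) * (n + 2)) := by gcongr

variable [CompleteSpace K]

theorem hasSum_psiEval_pow (hΨ : IsPsi p q Ψ) (hq : 2 ≤ q) (hp0 : 0 < ‖(p : K)‖)
    (hp1 : ‖(p : K)‖ < 1) (y : K) (N : ℕ) :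
    HasSum (fun n => ((coeff n (Ψ ^ N) : ℤ) : K) * y ^ n) (psiEval Ψ y ^ N) := by
  obtain ⟨t, ht⟩ := (eventually_pow_mul_lt_one hp0.le hp1 ‖y‖).exists
  obtain ⟨C, -, hC⟩ := hΨ.exists_norm_coeff_le hq hp0 t
  simpa [← map_pow, psiEval] using PowerSeries.hasSum_coeff_pow_mul_pow (by positivity) hC ht N

theorem hasSum_inv_pow_mul_psiEval_pow (hΨ : IsPsi p q Ψ) (hq : 2 ≤ q) (hp0 : 0 < ‖(p : K)‖)
    (hp1 : ‖(p : K)‖ < 1) (x : K) (k : ℕ) :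
    HasSum (fun n => (((p : ℤ) ^ (k * (n - 1)) * coeff n (Ψ ^ q ^ k) : ℤ) : K) * x ^ n)
      (((p : K) ^ k)⁻¹ * psiEval Ψ ((p : K) ^ k * x) ^ q ^ k) := by
  refine ((hΨ.hasSum_psiEval_pow hq hp0 hp1 ((p : K) ^ k * x) (q ^ k)).mul_left
    ((p : K) ^ k)⁻¹).congr_fun fun n => ?_
  rcases n with _ | n
  · simp [coeff_pow_eq_zero_of_lt hΨ.1 (pow_pos (by omega : 0 < q) k)]
  · have : (p : K) ≠ 0 := norm_pos_iff.mp hp0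
    push_cast
    rw [mul_pow, pow_mul]
    field_simp
    ring

/-- Truncating the functional equation `∑ₖ p⁻ᵏ Ψ(pᵏ x)^{qᵏ} = x` after `N` terms only changes
coefficients of `xⁿ` with `qᴺ ≤ n`, each by a multiple of `p ^ (N * (n - 1))`. -/
theorem norm_sum_range_sub_le (hΨ : IsPsi p q Ψ) (hq : 2 ≤ q) (hp0 : 0 < ‖(p : K)‖)
    (hp1 : ‖(p : K)‖ < 1) (x : K) {N : ℕ} (hN : 1 ≤ N) (hx : ‖(p : K)‖ ^ N * ‖x‖ ≤ 1) :
    ‖∑ k ∈ Finset.range N, ((p : K) ^ k)⁻¹ * psiEval Ψ ((p : K) ^ k * x) ^ q ^ k - x‖ ≤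
      ‖(p : K)‖ ^ N * ‖x‖ ^ 2 := by
  set r := ‖(p : K)‖
  have hr1 : r ≤ 1 := IsUltrametricDist.norm_natCast_le_one K p
  have hp : p ≠ 0 := by rintro rfl; simp [r] at hp0
  set D : ℕ → ℕ → ℤ := fun k n => (p : ℤ) ^ (k * (n - 1)) * coeff n (Ψ ^ q ^ k)
  have hsum : HasSum
      (fun n => ((∑ k ∈ Finset.range N, D k n - if n = 1 then 1 else 0 : ℤ) : K) * x ^ n)
      (∑ k ∈ Finset.range N, ((p : K) ^ k)⁻¹ * psiEval Ψ ((p : K) ^ k * x) ^ q ^ k - x) := by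
    refine ((hasSum_sum fun k _ => hΨ.hasSum_inv_pow_mul_psiEval_pow hq hp0 hp1 x k).sub
      (hasSum_ite_eq 1 x)).congr_fun fun n => ?_
    simp only [D]
    push_cast
    rw [sub_mul, Finset.sum_mul]
    split_ifs with h <;> simp [h]
  rw [← hsum.tsum_eq]
  refine IsUltrametricDist.norm_tsum_le_of_forall_le_of_nonneg (by positivity) fun n => ?_
  rcases Nat.eq_zero_or_pos n with rfl | hn
  · simp [D, coeff_pow_eq_zero_of_lt hΨ.1 (pow_pos (by omega : 0 < q) _)]
    positivity
  rw [← hΨ.sum_range_coeff_pow hp hq hn (by omega : n < N + (n + 1)),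
    ← Finset.sum_range_add_sum_Ico _ (by omega : N ≤ N + (n + 1)), sub_add_cancel_left,
    Int.cast_neg, neg_mul, norm_neg]
  push_cast [Finset.sum_mul]
  refine IsUltrametricDist.norm_sum_le_of_forall_le_of_nonneg (by positivity) fun k hk => ?_
  have hNk : N ≤ k := (Finset.mem_Ico.mp hk).1
  rcases lt_or_ge n (q ^ k) with hnq | hqn
  · simp only [coeff_pow_eq_zero_of_lt hΨ.1 hnq, Int.cast_zero, mul_zero, zero_mul, norm_zero]
    positivity
  obtain ⟨m, rfl⟩ : ∃ m, n = m + 2 :=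
    ⟨n - 2, by have := le_self_pow (by omega : 1 ≤ q) (by omega : k ≠ 0); omega⟩
  rw [norm_mul, norm_mul, norm_pow, norm_pow, show m + 2 - 1 = m + 1 by omega]
  calc r ^ (k * (m + 1)) * ‖((coeff (m + 2) (Ψ ^ q ^ k) : ℤ) : K)‖ * ‖x‖ ^ (m + 2)
      ≤ r ^ (N * (m + 1)) * 1 * ‖x‖ ^ (m + 2) :=
        mul_le_mul_of_nonneg_right (mul_le_mul
          (pow_le_pow_of_le_one hp0.le hr1 (Nat.mul_le_mul_right _ hNk))
          (IsUltrametricDist.norm_intCast_le_one K _) (norm_nonneg _) (by positivity))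
          (by positivity)
    _ = (r ^ N * ‖x‖) ^ (m + 1) * ‖x‖ := by ring
    _ ≤ (r ^ N * ‖x‖) * ‖x‖ := by
        gcongr
        exact pow_le_of_le_one (by positivity) hx m.succ_ne_zero
    _ = r ^ N * ‖x‖ ^ 2 := by ring

theorem tendsto_sum_range (hΨ : IsPsi p q Ψ) (hq : 2 ≤ q) (hp0 : 0 < ‖(p : K)‖)
    (hp1 : ‖(p : K)‖ < 1) (x : K) :
    Tendsto (fun N => ∑ k ∈ Finset.range N, ((p : K) ^ k)⁻¹ * psiEval Ψ ((p : K) ^ k * x) ^ q ^ k)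
      atTop (𝓝 x) := by
  rw [tendsto_iff_norm_sub_tendsto_zero]
  refine squeeze_zero' (.of_forall fun _ => norm_nonneg _) ?_
    (by simpa using (tendsto_pow_atTop_nhds_zero_of_lt_one hp0.le hp1).mul_const (‖x‖ ^ 2))
  filter_upwards [eventually_pow_mul_lt_one hp0.le hp1 ‖x‖, eventually_ge_atTop 1] with N hx hN
  exact hΨ.norm_sum_range_sub_le hq hp0 hp1 x hN hx.le

theorem tendsto_sum_range_psiEval (hΨ : IsPsi p q Ψ) (hq : 2 ≤ q) (hp0 : 0 < ‖(p : K)‖)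
    (hp1 : ‖(p : K)‖ < 1) (x : K) :
    Tendsto (fun N => ∑ k ∈ Finset.range N, ((p : K) ^ (k + 1))⁻¹ *
        (psiEval Ψ ((p : K) ^ (k + 1) * x) ^ q ^ k -
          psiEval Ψ ((p : K) ^ (k + 1) * x) ^ q ^ (k + 1)))
      atTop (𝓝 (psiEval Ψ x)) := by
  set S : K → ℕ → K := fun z N =>
    ∑ k ∈ Finset.range N, ((p : K) ^ k)⁻¹ * psiEval Ψ ((p : K) ^ k * z) ^ q ^ k
  have hlim : Tendsto (fun N => psiEval Ψ x - (S x (N + 1) - (p : K)⁻¹ * S ((p : K) * x) N))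
      atTop (𝓝 (psiEval Ψ x)) := by
    have h := tendsto_const_nhds (x := psiEval Ψ x) |>.sub
      (((hΨ.tendsto_sum_range hq hp0 hp1 x).comp (tendsto_add_atTop_nat 1)).sub
        ((hΨ.tendsto_sum_range hq hp0 hp1 ((p : K) * x)).const_mul (p : K)⁻¹))
    rwa [inv_mul_cancel_left₀ (norm_pos_iff.mp hp0), sub_self, sub_zero] at h
  refine hlim.congr fun N => ?_
  simp only [S]
  rw [Finset.sum_range_succ', Finset.mul_sum]
  simp only [pow_zero, inv_one, one_mul, pow_one]
  rw [show ∀ a b c : K, a - (b + a - c) = c - b from fun a b c => by ring,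
    ← Finset.sum_sub_distrib]
  refine Finset.sum_congr rfl fun k _ => ?_
  rw [show (p : K) ^ k * ((p : K) * x) = (p : K) ^ (k + 1) * x by ring]
  ring

theorem norm_psiEval_le_one {f : ℕ} (hΨ : IsPsi p (p ^ f) Ψ) (hp : p.Prime) (hf : 0 < f)
    (hres : ∀ y : K, ‖y‖ ≤ 1 → ‖y ^ p ^ f - y‖ ≤ ‖(p : K)‖) (hp0 : 0 < ‖(p : K)‖)
    (hp1 : ‖(p : K)‖ < 1) (m : ℕ) : ∀ x : K, ‖(p : K) ^ m * x‖ ≤ 1 → ‖psiEval Ψ x‖ ≤ 1 := by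
  have hq : 2 ≤ p ^ f := hp.two_le.trans (le_self_pow hp.one_lt.le hf.ne')
  induction m with
  | zero => exact fun x hx => norm_psiEval_le_one_of_norm_le_one Ψ (by simpa using hx)
  | succ m ih =>
    intro x hx
    have hy : ∀ k, ‖psiEval Ψ ((p : K) ^ (k + 1) * x)‖ ≤ 1 := fun k => ih _ <| by
      rw [← mul_assoc, ← pow_add, show m + (k + 1) = k + (m + 1) by ring, pow_add, mul_assoc,
        norm_mul, norm_pow]
      exact mul_le_one₀ (pow_le_one₀ hp0.le hp1.le) (norm_nonneg _) hx
    refine le_of_tendsto' (hΨ.tendsto_sum_range_psiEval hq hp0 hp1 x).norm fun N =>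
      IsUltrametricDist.norm_sum_le_of_forall_le_of_nonneg zero_le_one fun k _ => ?_
    rw [norm_mul, norm_inv, norm_pow, norm_sub_rev]
    exact inv_mul_le_one_of_le₀ (norm_pow_pow_succ_sub_pow_pow_le hp hf hres (hy k) k)
      (by positivity)

end IsPsi

/-- `ℚ_q` is modelled by a complete ultrametric field `K` with `‖p‖ = p⁻¹` whose residue field
lies in `𝔽_q` (`hres`), and `ℤ_q` by its closed unit ball. -/
theorem psi_maps_Qq_to_Zq_general (p f : ℕ) (hp : p.Prime) (hf : 0 < f) (q : ℕ) (hq : q = p ^ f)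
    (Ψ : PowerSeries ℤ) (hΨ : IsPsi p q Ψ)
    (K : Type) [NormedField K] [CompleteSpace K] (hna : IsUltrametricDist K)
    (hpK : ‖(p : K)‖ = (p : ℝ)⁻¹)
    (hres : ∀ x : K, ‖x‖ ≤ 1 → ‖x ^ q - x‖ ≤ (p : ℝ)⁻¹)
    (a : K) :
    Summable (fun i : ℕ => ((PowerSeries.coeff (R := ℤ) i Ψ : ℤ) : K) * a ^ i) ∧
    ‖psiEval Ψ a‖ ≤ 1 := by
  subst hq
  rw [← hpK] at hres
  have hp0 : 0 < ‖(p : K)‖ := by rw [hpK]; exact inv_pos.2 (by exact_mod_cast hp.pos)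
  have hp1 : ‖(p : K)‖ < 1 := by
    rw [hpK]; exact inv_lt_one_of_one_lt₀ (by exact_mod_cast hp.one_lt)
  have hq : 2 ≤ p ^ f := hp.two_le.trans (le_self_pow hp.one_lt.le hf.ne')
  obtain ⟨m, hm⟩ := (eventually_pow_mul_lt_one hp0.le hp1 ‖a‖).exists
  refine ⟨by simpa using (hΨ.hasSum_psiEval_pow hq hp0 hp1 a 1).summable,
    hΨ.norm_psiEval_le_one hp hf hres hp0 hp1 m a ?_⟩
  rw [norm_mul, norm_pow]
  exact hm.le

/-- for every `a ∈ ℚ_q`, the value `Ψ_q(a)` lies in `ℤ_q`. Here `ℚ_q` is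
modelled as a complete nonarchimedean normed field `K` with `‖p‖ = p⁻¹`, value group
`p^ℤ` (unramified) and residue field contained in `𝔽_q`; `ℤ_q` is the unit ball
`{x : ‖x‖ ≤ 1}`, and `Ψ_q(a)` is the (convergent, since `Ψ_q` is entire) sum of the
series. -/
theorem psi_maps_Qq_to_Zq (p f : ℕ) (hp : p.Prime) (hf : 0 < f) (q : ℕ) (hq : q = p ^ f)
    (Ψ : PowerSeries ℤ) (hΨ : IsPsi p q Ψ)
    (K : Type) [NormedField K] [CompleteSpace K] (hna : IsUltrametricDist K)
    (hpK : ‖(p : K)‖ = (p : ℝ)⁻¹)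
    (hdisc : ∀ x : K, x ≠ 0 → ∃ m : ℤ, ‖x‖ = (p : ℝ) ^ m)
    (hres : ∀ x : K, ‖x‖ ≤ 1 → ‖x ^ q - x‖ ≤ (p : ℝ)⁻¹)
    (a : K) :
    Summable (fun i : ℕ => ((PowerSeries.coeff (R := ℤ) i Ψ : ℤ) : K) * a ^ i) ∧
    ‖psiEval Ψ a‖ ≤ 1 :=
  psi_maps_Qq_to_Zq_general p f hp hf q hq Ψ hΨ K hna hpK hres a
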